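/- Let U : ℝ³ → M₂(ℂ) be a smooth map with values in SU(2) which solves the static Skyrme equation and satisfies U(x) = I and DU(x) = 0 for every x in the plane P = {x₃ = 0}. Then U vanishes to infinite order along P: for every n ≥ 1 and every x ∈ P, the n-th iterated Fréchet derivative of U at x is zero. -/

import Mathlib

open Matrix

attribute [local instance] Matrix.frobeniusNormedAddCommGroup Matrix.frobeniusNormedSpace
attribute [local instance] Matrix.frobeniusNormedRing Matrix.frobeniusNormedAlgebra

namespace Stmt13

abbrev E3 : Type := Fin 3 → ℝ
abbrev M2 : Type := Matrix (Fin 2) (Fin 2) ℂ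

noncomputable def pd (i : Fin 3) (f : E3 → M2) : E3 → M2 :=
  fun x => fderiv ℝ f x (Pi.single i 1)

noncomputable def Dw : List (Fin 3) → (E3 → M2) → E3 → M2
  | [], f => f
  | i :: w, f => Dw w (pd i f)

theorem pd_smooth {f : E3 → M2} (hf : ContDiff ℝ (⊤ : ℕ∞) f) (i : Fin 3) :
    ContDiff ℝ (⊤ : ℕ∞) (pd i f) :=
  (hf.fderiv_right (by simp)).clm_apply contDiff_const

theorem Dw_smooth {f : E3 → M2} (hf : ContDiff ℝ (⊤ : ℕ∞) f) :
    ∀ w : List (Fin 3), ContDiff ℝ (⊤ : ℕ∞) (Dw w f) := by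
  intro w
  induction w generalizing f with
  | nil => exact hf
  | cons i w ih => exact ih (pd_smooth hf i)

theorem pd_add {f g : E3 → M2} (hf : ContDiff ℝ (⊤ : ℕ∞) f) (hg : ContDiff ℝ (⊤ : ℕ∞) g) (i : Fin 3) :
    pd i (fun x => f x + g x) = fun x => pd i f x + pd i g x := by
  funext x
  simp only [pd]
  erw [fderiv_fun_add ((hf.differentiable (by simp)) x) ((hg.differentiable (by simp)) x)]
  rfl

theorem Dw_add {f g : E3 → M2} (hf : ContDiff ℝ (⊤ : ℕ∞) f) (hg : ContDiff ℝ (⊤ : ℕ∞) g)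
    (w : List (Fin 3)) :
    Dw w (fun x => f x + g x) = fun x => Dw w f x + Dw w g x := by
  induction w generalizing f g with
  | nil => rfl
  | cons i w ih =>
    show Dw w (pd i fun x => f x + g x) = _
    rw [pd_add hf hg i]
    exact ih (pd_smooth hf i) (pd_smooth hg i)

theorem pd_smul (c : ℂ) {f : E3 → M2} (hf : ContDiff ℝ (⊤ : ℕ∞) f) (i : Fin 3) :
    pd i (fun x => c • f x) = fun x => c • pd i f x := by
  funext x
  simp only [pd]
  erw [fderiv_fun_const_smul ((hf.differentiable (by simp)) x) c]
  rfl

theorem Dw_smul (c : ℂ) {f : E3 → M2} (hf : ContDiff ℝ (⊤ : ℕ∞) f) (w : List (Fin 3)) :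
    Dw w (fun x => c • f x) = fun x => c • Dw w f x := by
  induction w generalizing f with
  | nil => rfl
  | cons i w ih =>
    show Dw w (pd i fun x => c • f x) = _
    rw [pd_smul c hf i]
    exact ih (pd_smooth hf i)

theorem pd_neg {f : E3 → M2} (hf : ContDiff ℝ (⊤ : ℕ∞) f) (i : Fin 3) :
    pd i (fun x => -f x) = fun x => -pd i f x := by
  funext x
  simp only [pd]
  erw [fderiv_fun_neg]
  rfl

theorem Dw_neg {f : E3 → M2} (hf : ContDiff ℝ (⊤ : ℕ∞) f) (w : List (Fin 3)) :
    Dw w (fun x => -f x) = fun x => -Dw w f x := by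
  induction w generalizing f with
  | nil => rfl
  | cons i w ih =>
    show Dw w (pd i fun x => -f x) = _
    rw [pd_neg hf i]
    exact ih (pd_smooth hf i)

theorem Dw_sub {f g : E3 → M2} (hf : ContDiff ℝ (⊤ : ℕ∞) f) (hg : ContDiff ℝ (⊤ : ℕ∞) g)
    (w : List (Fin 3)) :
    Dw w (fun x => f x - g x) = fun x => Dw w f x - Dw w g x := by
  have : (fun x => f x - g x) = fun x => f x + -g x := by
    funext x; exact sub_eq_add_neg _ _
  rw [this, Dw_add hf hg.neg, Dw_neg hg]
  funext x
  exact (sub_eq_add_neg _ _).symm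

theorem pd_mul {f g : E3 → M2} (hf : ContDiff ℝ (⊤ : ℕ∞) f) (hg : ContDiff ℝ (⊤ : ℕ∞) g) (i : Fin 3) :
    pd i (fun x => f x * g x) = fun x => pd i f x * g x + f x * pd i g x := by
  funext x
  have h := congrArg (fun L => L (Pi.single i 1)) (fderiv_fun_mul' ((hf.differentiable (by simp)) x) ((hg.differentiable (by simp)) x))
  simp only [ContinuousLinearMap.add_apply, ContinuousLinearMap.smul_apply,
    ContinuousLinearMap.smulRight_apply, smul_eq_mul] at h
  simp only [pd]
  rw [add_comm]
  exact h

theorem pd_const (c : M2) (i : Fin 3) : pd i (fun _ => c) = fun _ => 0 := by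
  funext x; simp [pd]

theorem Dw_zero (w : List (Fin 3)) : Dw w (fun _ => (0 : M2)) = fun _ => 0 := by
  induction w with
  | nil => rfl
  | cons i w ih =>
    show Dw w (pd i fun _ => (0 : M2)) = _
    rw [pd_const 0 i, ih]

theorem Dw_const (c : M2) (w : List (Fin 3)) (hw : w ≠ []) :
    Dw w (fun _ => c) = fun _ => 0 := by
  cases w with
  | nil => exact absurd rfl hw
  | cons i w =>
    show Dw w (pd i fun _ => c) = _
    rw [pd_const c i, Dw_zero]

theorem Dw_sum {ι : Type*} (s : Finset ι) (g : ι → E3 → M2)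
    (hg : ∀ j ∈ s, ContDiff ℝ (⊤ : ℕ∞) (g j)) (w : List (Fin 3)) :
    Dw w (fun x => ∑ j ∈ s, g j x) = fun x => ∑ j ∈ s, Dw w (g j) x := by
  classical
  induction s using Finset.induction_on with
  | empty => simp only [Finset.sum_empty]; rw [Dw_zero]
  | insert a t hni ih =>
    simp only [Finset.sum_insert hni]
    rw [Dw_add (hg a (Finset.mem_insert_self a t))
      (ContDiff.sum fun j hj => hg j (Finset.mem_insert_of_mem hj)),
      ih fun j hj => hg j (Finset.mem_insert_of_mem hj)]

theorem pd_comm {f : E3 → M2} (hf : ContDiff ℝ (⊤ : ℕ∞) f) (i j : Fin 3) :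
    pd i (pd j f) = pd j (pd i f) := by
  funext x
  have hsymm : IsSymmSndFDerivAt ℝ f x := hf.contDiffAt.isSymmSndFDerivAt (by simp only [minSmoothness_of_isRCLikeNormedField]; exact WithTop.coe_le_coe.mpr le_top)
  have key : ∀ a b : Fin 3,
      pd a (pd b f) x = fderiv ℝ (fderiv ℝ f) x (Pi.single a 1) (Pi.single b 1) := by
    intro a b
    show fderiv ℝ (fun y => (fderiv ℝ f y) (Pi.single b 1)) x (Pi.single a 1) = _
    erw [fderiv_clm_apply ((hf.fderiv_right (m := (⊤ : ℕ∞)) (by simp)).differentiable (by simp) x)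
      (differentiableAt_const _)]
    simp
    rfl
  rw [key i j, key j i]
  exact hsymm _ _

theorem Dw_append (u v : List (Fin 3)) (f : E3 → M2) :
    Dw (u ++ v) f = Dw v (Dw u f) := by
  induction u generalizing f with
  | nil => rfl
  | cons i u ih => exact ih (pd i f)

theorem Dw_cons_to_back {f : E3 → M2} (hf : ContDiff ℝ (⊤ : ℕ∞) f) (i : Fin 3) (v : List (Fin 3)) :
    Dw (i :: v) f = Dw (v ++ [i]) f := by
  induction v generalizing f with
  | nil => rfl
  | cons j v ih =>
    show Dw v (pd j (pd i f)) = Dw (v ++ [i]) (pd j f)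
    rw [pd_comm hf j i]
    exact ih (pd_smooth hf j)

theorem Dw_to_back {f : E3 → M2} (hf : ContDiff ℝ (⊤ : ℕ∞) f) (u : List (Fin 3)) (i : Fin 3)
    (v : List (Fin 3)) :
    Dw (u ++ i :: v) f = pd i (Dw (u ++ v) f) := by
  rw [Dw_append u (i :: v), Dw_cons_to_back (Dw_smooth hf u) i v, Dw_append v [i],
    ← Dw_append u v]
  rfl

theorem tangential {f : E3 → M2} (hf : ContDiff ℝ (⊤ : ℕ∞) f)
    (hvan : ∀ y : E3, y 2 = 0 → f y = 0) {i : Fin 3} (hi : i ≠ 2)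
    {x : E3} (hx : x 2 = 0) : pd i f x = 0 := by
  set v : E3 := Pi.single i 1 with hv
  have hv2 : v 2 = 0 := by
    rw [hv]
    exact Pi.single_eq_of_ne (Ne.symm hi) 1
  have hcurve : ∀ t : ℝ, (x + t • v) 2 = 0 := by
    intro t
    simp [hx, hv2]
  have hγ : ∀ t : ℝ, HasDerivAt (fun s : ℝ => x + s • v) v t := by
    intro t
    simpa using ((hasDerivAt_id t).smul_const v).const_add x
  have hcomp : ∀ t : ℝ, HasDerivAt (fun s : ℝ => f (x + s • v)) (fderiv ℝ f (x + t • v) v) t :=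
    fun t => (((hf.differentiable (by simp)) (x + t • v)).hasFDerivAt).comp_hasDerivAt t (hγ t)
  have hzero : (fun s : ℝ => f (x + s • v)) = fun _ => 0 := by
    funext s; exact hvan _ (hcurve s)
  have h0 : HasDerivAt (fun s : ℝ => f (x + s • v)) 0 0 := by
    rw [hzero]; exact hasDerivAt_const 0 0
  have := (hcomp 0).unique h0
  show fderiv ℝ f x v = 0
  simpa using this

noncomputable def starCLM : M2 →L[ℝ] M2 :=
  LinearMap.toContinuousLinearMap
    { toFun := star
      map_add' := star_add
      map_smul' := by intro c A; simp }

theorem star_smooth {f : E3 → M2} (hf : ContDiff ℝ (⊤ : ℕ∞) f) :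
    ContDiff ℝ (⊤ : ℕ∞) fun y => star (f y) :=
  starCLM.contDiff.comp hf

theorem pd_star {f : E3 → M2} (hf : ContDiff ℝ (⊤ : ℕ∞) f) (i : Fin 3) :
    pd i (fun x => star (f x)) = fun x => star (pd i f x) := by
  funext x
  have h : HasFDerivAt (fun y => starCLM (f y)) (starCLM.comp (fderiv ℝ f x)) x :=
    starCLM.hasFDerivAt.comp x ((hf.differentiable (by simp)) x).hasFDerivAt
  show fderiv ℝ (fun y => star (f y)) x (Pi.single i 1) = star (fderiv ℝ f x (Pi.single i 1))
  rw [show (fun y => star (f y)) = fun y => starCLM (f y) from rfl, h.fderiv]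
  rfl

theorem Dw_star {f : E3 → M2} (hf : ContDiff ℝ (⊤ : ℕ∞) f) (w : List (Fin 3)) :
    Dw w (fun x => star (f x)) = fun x => star (Dw w f x) := by
  induction w generalizing f with
  | nil => rfl
  | cons i w ih =>
    show Dw w (pd i fun x => star (f x)) = _
    rw [pd_star hf i]
    exact ih (pd_smooth hf i)

/-- `Ord m f` : `f` is smooth and all its directional-derivative words of length `< m`
vanish on the plane `{x 2 = 0}`. -/
def Ord (m : ℕ) (f : E3 → M2) : Prop :=
  ContDiff ℝ (⊤ : ℕ∞) f ∧ ∀ w : List (Fin 3), w.length < m → ∀ x : E3, x 2 = 0 → Dw w f x = 0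

theorem Ord.smooth {m f} (h : Ord m f) : ContDiff ℝ (⊤ : ℕ∞) f := h.1

theorem Ord.mono {m m' : ℕ} {f} (h : Ord m f) (hm : m' ≤ m) : Ord m' f :=
  ⟨h.1, fun w hw => h.2 w (lt_of_lt_of_le hw hm)⟩

theorem Ord.pd {m : ℕ} {f} (h : Ord m f) (i : Fin 3) : Ord (m - 1) (pd i f) := by
  refine ⟨pd_smooth h.1 i, fun w hw x hx => ?_⟩
  exact h.2 (i :: w) (by simp only [List.length_cons]; omega) x hx

theorem Ord.add {m : ℕ} {f g} (hf : Ord m f) (hg : Ord m g) :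
    Ord m (fun x => f x + g x) :=
  ⟨hf.1.add hg.1, fun w hw x hx => by
    simp only [Dw_add hf.1 hg.1, hf.2 w hw x hx, hg.2 w hw x hx, add_zero]⟩

theorem Ord.sub {m : ℕ} {f g} (hf : Ord m f) (hg : Ord m g) :
    Ord m (fun x => f x - g x) :=
  ⟨hf.1.sub hg.1, fun w hw x hx => by
    simp only [Dw_sub hf.1 hg.1, hf.2 w hw x hx, hg.2 w hw x hx, sub_zero]⟩

theorem Ord.star {m : ℕ} {f} (hf : Ord m f) :
    Ord m (fun x => star (f x)) :=
  ⟨star_smooth hf.1, fun w hw x hx => by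
    simp only [Dw_star hf.1, hf.2 w hw x hx, star_zero]⟩

theorem Ord.sum {m : ℕ} {ι : Type*} {s : Finset ι} {g : ι → E3 → M2}
    (hg : ∀ j ∈ s, Ord m (g j)) :
    Ord m (fun x => ∑ j ∈ s, g j x) := by
  refine ⟨ContDiff.sum fun j hj => (hg j hj).1, fun w hw x hx => ?_⟩
  simp only [Dw_sum s g (fun j hj => (hg j hj).1) w]
  exact Finset.sum_eq_zero fun j hj => (hg j hj).2 w hw x hx

theorem ord_mul_aux :
    ∀ (w : List (Fin 3)) {a b : ℕ} {f g : E3 → M2}, Ord a f → Ord b g →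
      w.length < a + b → ∀ x : E3, x 2 = 0 → Dw w (fun y => f y * g y) x = 0 := by
  intro w
  induction w with
  | nil =>
    intro a b f g hf hg hlen x hx
    show f x * g x = 0
    simp only [List.length_nil] at hlen
    rcases Nat.eq_zero_or_pos a with ha | ha
    · rw [show g x = 0 from hg.2 [] (by simp only [List.length_nil]; omega) x hx, mul_zero]
    · rw [show f x = 0 from hf.2 [] (by simp only [List.length_nil]; omega) x hx, zero_mul]
  | cons i w ih =>
    intro a b f g hf hg hlen x hx
    have hlen' : w.length + 1 < a + b := by simpa using hlen
    have hF : ContDiff ℝ (⊤ : ℕ∞) (fun y => pd i f y * g y) := (pd_smooth hf.1 i).mul hg.1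
    have hG : ContDiff ℝ (⊤ : ℕ∞) (fun y => f y * pd i g y) := hf.1.mul (pd_smooth hg.1 i)
    have h1 : Dw w (fun y => pd i f y * g y) x = 0 := ih (hf.pd i) hg (by omega) x hx
    have h2 : Dw w (fun y => f y * pd i g y) x = 0 := ih hf (hg.pd i) (by omega) x hx
    have key : Dw (i :: w) (fun y => f y * g y) x
        = Dw w (fun y => pd i f y * g y) x + Dw w (fun y => f y * pd i g y) x := by
      show Dw w (pd i fun y => f y * g y) x = _
      rw [pd_mul hf.1 hg.1, Dw_add (pd_smooth hf.1 i |>.mul hg.1) (hf.1.mul (pd_smooth hg.1 i))]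
    rw [key, h1, h2, add_zero]

theorem Ord.mul {a b : ℕ} {f g : E3 → M2} (hf : Ord a f) (hg : Ord b g) :
    Ord (a + b) (fun y => f y * g y) :=
  ⟨hf.1.mul hg.1, fun w hw => ord_mul_aux w hf hg hw⟩

theorem iFD_rep {f : E3 → M2} (hf : ContDiff ℝ (⊤ : ℕ∞) f) :
    ∀ (n : ℕ) (v : Fin n → Fin 3), ∃ w : List (Fin 3), w.length = n ∧
      ∀ x : E3, iteratedFDeriv ℝ n f x (fun k => Pi.single (v k) 1) = Dw w f x := by
  intro n
  induction n with
  | zero =>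
    exact fun v => ⟨[], rfl, fun x => by simp [iteratedFDeriv_zero_apply]; rfl⟩
  | succ n ih =>
    intro v
    obtain ⟨w, hwl, hw⟩ := ih (fun k => v k.succ)
    refine ⟨w ++ [v 0], by simp [hwl], fun x => ?_⟩
    have hdiff : DifferentiableAt ℝ (iteratedFDeriv ℝ n f) x :=
      ((hf.iteratedFDeriv_right (m := (⊤ : ℕ∞)) (by exact_mod_cast le_top)).differentiable (by simp)) x
    have h1 : iteratedFDeriv ℝ (n + 1) f x (fun k => Pi.single (v k) 1)
        = (fderiv ℝ (iteratedFDeriv ℝ n f) x (Pi.single (v 0) 1))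
            (fun k => Pi.single (v k.succ) 1) :=
      iteratedFDeriv_succ_apply_left _
    have h2 : fderiv ℝ (fun y => iteratedFDeriv ℝ n f y (fun k => Pi.single (v k.succ) 1)) x
          (Pi.single (v 0) 1)
        = (fderiv ℝ (iteratedFDeriv ℝ n f) x (Pi.single (v 0) 1))
            (fun k => Pi.single (v k.succ) 1) := by
      erw [fderiv_continuousMultilinear_apply_const_apply hdiff]
    have h3 : (fun y => iteratedFDeriv ℝ n f y (fun k => Pi.single (v k.succ) 1)) = Dw w f :=
      funext fun y => hw y
    rw [h1, ← h2, h3, Dw_append w [v 0]]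
    rfl

theorem iFD_zero_of_words {f : E3 → M2} (hf : ContDiff ℝ (⊤ : ℕ∞) f)
    (hvan : ∀ w : List (Fin 3), 1 ≤ w.length → ∀ x : E3, x 2 = 0 → Dw w f x = 0) :
    ∀ n : ℕ, 1 ≤ n → ∀ x : E3, x 2 = 0 → iteratedFDeriv ℝ n f x = 0 := by
  intro n hn x hx
  have hbasis : ∀ v : Fin n → Fin 3,
      iteratedFDeriv ℝ n f x (fun k => Pi.single (v k) 1) = 0 := by
    intro v
    obtain ⟨w, hwl, hw⟩ := iFD_rep hf n v
    rw [hw x]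
    exact hvan w (by omega) x hx
  have h2 : (iteratedFDeriv ℝ n f x).toMultilinearMap
      = (0 : ContinuousMultilinearMap ℝ (fun _ : Fin n => E3) M2).toMultilinearMap := by
    apply Module.Basis.ext_multilinear (fun _ => Pi.basisFun ℝ (Fin 3))
    intro v
    simpa using hbasis v
  refine ContinuousMultilinearMap.ext fun m => ?_
  exact congrFun (congrArg DFunLike.coe h2) m

noncomputable def Lc (U : E3 → M2) (i : Fin 3) : E3 → M2 :=
  fun y => star (U y) * pd i U y

noncomputable def Nc (U : E3 → M2) (i : Fin 3) : E3 → M2 := fun y =>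
  ∑ j, (Lc U j y * (Lc U j y * Lc U i y - Lc U i y * Lc U j y)
      - (Lc U j y * Lc U i y - Lc U i y * Lc U j y) * Lc U j y)

noncomputable def Ac (U : E3 → M2) (i : Fin 3) : E3 → M2 := fun y =>
  Lc U i y - (1 / 4 : ℂ) • Nc U i y

theorem key (U : E3 → M2) (hsmooth : ContDiff ℝ (⊤ : ℕ∞) U)
    (L : E3 → Fin 3 → M2) (hL : ∀ y i, L y i = star (U y) * pd i U y)
    (hSkyrme : ∀ x : E3, ∑ i, pd i (fun y => L y i
        - (1 / 4 : ℂ) • ∑ j, (L y j * (L y j * L y i - L y i * L y j)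
            - (L y j * L y i - L y i * L y j) * L y j)) x = 0)
    (hU : ∀ x : E3, x 2 = 0 → U x = 1) (hDU : ∀ x : E3, x 2 = 0 → fderiv ℝ U x = 0) :
    ∀ n : ℕ, 1 ≤ n → ∀ w : List (Fin 3), w.length = n → ∀ x : E3, x 2 = 0 →
      Dw w U x = 0 := by
  intro n
  induction n using Nat.strong_induction_on with
  | _ n IH =>
  intro hn w hw x hx
  rcases n with _ | m
  · omega
  rcases Nat.eq_zero_or_pos m with hm | hm
  · -- n = 1 : first derivatives vanish by hypothesis
    subst hm
    rcases w with _ | ⟨i, t⟩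
    · simp at hw
    · obtain rfl : t = [] := List.eq_nil_of_length_eq_zero (by simpa using hw)
      show fderiv ℝ U x (Pi.single i 1) = 0
      rw [hDU x hx]
      rfl
  -- n = m + 1, m ≥ 1
  obtain ⟨k, rfl⟩ : ∃ k, m = k + 1 := ⟨m - 1, by omega⟩
  have IH' : ∀ w' : List (Fin 3), 1 ≤ w'.length → w'.length ≤ k + 1 → ∀ y : E3, y 2 = 0 →
      Dw w' U y = 0 := fun w' h1 h2 y hy => IH w'.length (by omega) h1 w' rfl y hy
  have tang_word : ∀ u v : List (Fin 3), ∀ j : Fin 3, j ≠ 2 →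
      (u ++ j :: v).length = k + 2 → ∀ y : E3, y 2 = 0 → Dw (u ++ j :: v) U y = 0 := by
    intro u v j hj hlen y hy
    rw [Dw_to_back hsmooth u j v]
    refine tangential (Dw_smooth hsmooth (u ++ v)) ?_ hj hy
    intro z hz
    refine IH' (u ++ v) ?_ ?_ z hz <;>
      · simp only [List.length_append, List.length_cons] at hlen ⊢
        omega
  by_cases hall : ∀ j ∈ w, j = (2 : Fin 3)
  · -- pure normal word : use the Skyrme equation
    set m := k + 1 with hmdef
    have hwrep : w = 2 :: 2 :: List.replicate k 2 := by
      have h1 : w = List.replicate (k + 2) 2 := by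
        rw [List.eq_replicate_iff]
        exact ⟨by omega, hall⟩
      rw [h1]
      rfl
    subst hwrep
    -- Ord facts under the induction hypothesis
    have hOrdU : Ord (m + 1) (fun y => U y - 1) := by
      refine ⟨hsmooth.sub contDiff_const, fun w' hw' y hy => ?_⟩
      rcases w' with _ | ⟨i, t⟩
      · show U y - 1 = 0
        rw [hU y hy, sub_self]
      · have hc : ContDiff ℝ (⊤ : ℕ∞) (fun _ : E3 => (1 : M2)) := contDiff_const
        simp only [Dw_sub hsmooth hc]
        rw [show Dw (i :: t) (fun _ : E3 => (1 : M2)) y = 0 from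
          by rw [Dw_const 1 (i :: t) (by simp)],
          show Dw (i :: t) U y = 0 from
            IH' (i :: t) (by simp) (by simp only [List.length_cons] at hw' ⊢; omega) y hy,
          sub_zero]
    have hOrdpdU : ∀ i : Fin 3, Ord m (pd i U) := by
      intro i
      refine ⟨pd_smooth hsmooth i, fun w' hw' y hy => ?_⟩
      exact IH' (i :: w') (by simp) (by simp only [List.length_cons]; omega) y hy
    have hdec : ∀ i : Fin 3, Lc U i = fun y => star (U y - 1) * pd i U y + pd i U y := by
      intro i
      funext y
      show star (U y) * pd i U y = _
      rw [star_sub, star_one, sub_mul, one_mul, sub_add_cancel]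
    have hLi : ∀ i : Fin 3, Ord m (Lc U i) := by
      intro i
      rw [hdec i]
      exact (((hOrdU.star.mul (hOrdpdU i)).mono (by omega)).add (hOrdpdU i))
    have hNi : ∀ i : Fin 3, Ord (m + 2) (Nc U i) := by
      intro i
      have h1 : ∀ j : Fin 3, Ord (m + m + m) (fun y =>
          Lc U j y * (Lc U j y * Lc U i y - Lc U i y * Lc U j y)
          - (Lc U j y * Lc U i y - Lc U i y * Lc U j y) * Lc U j y) := by
        intro j
        have hcomm : Ord (m + m) (fun y => Lc U j y * Lc U i y - Lc U i y * Lc U j y) :=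
          ((hLi j).mul (hLi i)).sub ((hLi i).mul (hLi j))
        exact (((hLi j).mul hcomm).mono (by omega)).sub (((hcomm.mul (hLi j))).mono (by omega))
      have h2 : Ord (m + m + m) (Nc U i) := Ord.sum fun j _ => h1 j
      exact h2.mono (by omega)
    have hAc : ∀ i : Fin 3, ContDiff ℝ (⊤ : ℕ∞) (Ac U i) :=
      fun i => (hLi i).smooth.sub (((hNi i).smooth).const_smul ((1 : ℂ) / 4))
    -- the Skyrme equation, in terms of `Ac`
    have hSk0 : (fun z : E3 => ∑ i, pd i (Ac U i) z) = fun _ => 0 := by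
      funext z
      have h := hSkyrme z
      have heq : ∀ i : Fin 3, (fun y => L y i
          - (1 / 4 : ℂ) • ∑ j, (L y j * (L y j * L y i - L y i * L y j)
              - (L y j * L y i - L y i * L y j) * L y j)) = Ac U i := by
        intro i
        funext y
        simp only [hL]
        rfl
      simp only [heq] at h
      exact h
    have hsum : ∑ i, Dw (List.replicate k 2) (pd i (Ac U i)) x = 0 := by
      have h1 := congrFun (congrArg (Dw (List.replicate k 2)) hSk0) x
      rw [Dw_sum Finset.univ (fun i => pd i (Ac U i)) (fun i _ => pd_smooth (hAc i) i),
        Dw_zero] at h1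
      exact h1
    -- identify each term with a pure word of U at the plane point
    have hterm : ∀ i : Fin 3, Dw (List.replicate k 2) (pd i (Ac U i)) x
        = Dw (i :: i :: List.replicate k 2) U x := by
      intro i
      have hlen1 : (i :: List.replicate k 2).length < m + 2 := by
        simp only [List.length_cons, List.length_replicate]
        omega
      have e2 : Dw (i :: List.replicate k 2) (Ac U i) x
          = Dw (i :: List.replicate k 2) (Lc U i) x
            - (1 / 4 : ℂ) • Dw (i :: List.replicate k 2) (Nc U i) x := by
        show Dw (i :: List.replicate k 2) (fun y => Lc U i y - (1 / 4 : ℂ) • Nc U i y) x = _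
        rw [Dw_sub (f := Lc U i) (g := fun y => (1 / 4 : ℂ) • Nc U i y) (hLi i).smooth
            ((hNi i).smooth.const_smul _) (i :: List.replicate k 2)]
        simp only [Dw_smul ((1 : ℂ) / 4) (hNi i).smooth]
      have e3 : Dw (i :: List.replicate k 2) (Nc U i) x = 0 :=
        (hNi i).2 _ hlen1 x hx
      have e4 : Dw (i :: List.replicate k 2) (Lc U i) x
          = Dw (i :: i :: List.replicate k 2) U x := by
        rw [hdec i]
        rw [Dw_add ((star_smooth (hsmooth.sub contDiff_const)).mul (pd_smooth hsmooth i))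
          (pd_smooth hsmooth i)]
        show Dw (i :: List.replicate k 2) (fun y => star (U y - 1) * pd i U y) x
            + Dw (i :: List.replicate k 2) (pd i U) x
          = Dw (i :: i :: List.replicate k 2) U x
        have e5 : Dw (i :: List.replicate k 2) (fun y => star (U y - 1) * pd i U y) x = 0 := by
          refine (hOrdU.star.mul (hOrdpdU i)).2 _ ?_ x hx
          simp only [List.length_cons, List.length_replicate]
          omega
        rw [e5, zero_add]
        rfl
      show Dw (i :: List.replicate k 2) (Ac U i) x = _
      rw [e2, e3, smul_zero, sub_zero, e4]
    rw [Fin.sum_univ_three, hterm 0, hterm 1, hterm 2] at hsum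
    have t0 : Dw ((0 : Fin 3) :: (0 : Fin 3) :: List.replicate k 2) U x = 0 :=
      tang_word [] ((0 : Fin 3) :: List.replicate k 2) 0 (by decide)
        (by simp only [List.nil_append, List.length_cons, List.length_replicate]) x hx
    have t1 : Dw ((1 : Fin 3) :: (1 : Fin 3) :: List.replicate k 2) U x = 0 :=
      tang_word [] ((1 : Fin 3) :: List.replicate k 2) 1 (by decide)
        (by simp only [List.nil_append, List.length_cons, List.length_replicate]) x hx
    rw [t0, t1, zero_add, zero_add] at hsum
    exact hsum
  · push_neg at hall
    obtain ⟨j, hjw, hj⟩ := hall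
    obtain ⟨u, v, rfl⟩ := List.append_of_mem hjw
    refine tang_word u v j hj ?_ x hx
    simpa using hw

end Stmt13

theorem stmt13 (U : (Fin 3 → ℝ) → Matrix (Fin 2) (Fin 2) ℂ)
    (hSU : ∀ y, (U y)ᴴ * U y = 1 ∧ (U y).det = 1)
    (hsmooth : ContDiff ℝ (⊤ : ℕ∞) U)
    (L : (Fin 3 → ℝ) → Fin 3 → Matrix (Fin 2) (Fin 2) ℂ)
    (hL : ∀ y i, L y i = (U y)ᴴ * fderiv ℝ U y (Pi.single i 1))
    (hSkyrme : ∀ x : Fin 3 → ℝ,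
      ∑ i, fderiv ℝ (fun y => L y i
          - (1 / 4 : ℂ) • ∑ j, (L y j * (L y j * L y i - L y i * L y j)
              - (L y j * L y i - L y i * L y j) * L y j)) x (Pi.single i 1) = 0)
    (hplane : ∀ x : Fin 3 → ℝ, x 2 = 0 → U x = 1 ∧ fderiv ℝ U x = 0) :
    ∀ n : ℕ, 1 ≤ n → ∀ x : Fin 3 → ℝ, x 2 = 0 → iteratedFDeriv ℝ n U x = 0 := by
  have hwords := Stmt13.key U hsmooth L (fun y i => hL y i)
    (fun x => hSkyrme x) (fun x hx => (hplane x hx).1) (fun x hx => (hplane x hx).2)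
  exact Stmt13.iFD_zero_of_words hsmooth
    (fun w hw x hx => hwords w.length hw w rfl x hx)
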